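/- Let R be a one-dimensional complete local domain over an algebraically closed field k of characteristic zero, which is a semigroup ring k[[t^{n₁},…,t^{n_r}]] inside its normalization S = k[[t]]. Then its first quadratic transform R₁ is again a semigroup ring, and dim_k(R₁·DR₁/R·DR) = dim_k(R₁/R). -/

import Mathlib

open PowerSeries

/-- The formal derivative on `k⟦t⟧` as a `k`-linear map. -/
noncomputable def formalDeriv (k : Type*) [CommRing k] :
    PowerSeries k →ₗ[k] PowerSeries k :=
  (PowerSeries.derivative k).toLinearMap

/-- The `k`-subspace `A·D(B)` of `S·Dt = S` spanned by the products `a·Db`. -/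
noncomputable def mulDeriv (k : Type*) [CommRing k]
    (A B : Set (PowerSeries k)) : Submodule k (PowerSeries k) :=
  Submodule.span k {y : PowerSeries k | ∃ a ∈ A, ∃ b ∈ B, y = a * formalDeriv k b}

/-- A subalgebra of `k⟦t⟧` is a semigroup ring if it consists exactly of the power series
supported on some numerical semigroup `M ⊆ ℕ`. -/
def IsSemigroupRing {k : Type*} [Field k] (R : Subalgebra k (PowerSeries k)) : Prop :=
  ∃ M : AddSubmonoid ℕ, ∀ f : PowerSeries k,
    f ∈ R ↔ ∀ d : ℕ, PowerSeries.coeff d f ≠ 0 → d ∈ M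

/-- The first quadratic transform `R₁ = R[x₂/x, …, xₙ/x]` of `R`,
given the quotients `zs i = xᵢ/x ∈ S`. -/
noncomputable def quadTransform {k : Type*} [Field k] {m : ℕ}
    (R : Subalgebra k (PowerSeries k)) (zs : Fin m → PowerSeries k) :
    Subalgebra k (PowerSeries k) :=
  Algebra.adjoin k ((R : Set (PowerSeries k)) ∪ Set.range zs)

/-!
Write `k⟦t⟧_N` for the power series supported on `N ⊆ ℕ`, so that `R = k⟦t⟧_M`. Since `t` lies in
the fraction field, `M` contains two consecutive integers and hence all integers from some `c` on:
`t^c k⟦t⟧ ⊆ R`. A subalgebra of `k⟦t⟧` containing `t^c k⟦t⟧` is closed under inverting units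
(truncated geometric series), and it contains `k⟦t⟧_N` as soon as it contains `t^d` for `d ∈ N`.

Write `x = tⁿ u` with `u` a unit of `k⟦t⟧`. Dividing the elements `t^(g + n)` of the maximal ideal
by `x` puts `u⁻¹ t^g` into `R₁` whenever `g + n ∈ M`; hence `u` and all `t^g` lie in `R₁`, and
`R₁ ⊇ k⟦t⟧_{M₁}` for `M₁` the semigroup generated by `{g | g + n ∈ M}`. Conversely `R` and the
`xᵢ/x = u⁻¹ (xᵢ/tⁿ)` are supported on `M₁`, so `R₁ = k⟦t⟧_{M₁}`.

For a semigroup ring `A = k⟦t⟧_N` in characteristic zero, `A·DA = k⟦t⟧_{N - 1}` (every series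
supported on `N - 1` is `D` of its integral). Both quotients therefore have bases indexed by
`M₁ \ M`, shifted by one in the case of `R₁·DR₁ / R·DR`.
-/

theorem AddSubmonoid.mem_of_mul_self_le {M : AddSubmonoid ℕ} {p d : ℕ} (hp : p ∈ M)
    (hp1 : p + 1 ∈ M) (hd : p * p ≤ d) : d ∈ M := by
  rcases p.eq_zero_or_pos with rfl | hp0
  · simpa using M.nsmul_mem hp1 d
  -- `d = q p + r` with `r < p ≤ q` is `r (p + 1) + (q - r) p`
  have hrq : d % p ≤ d / p := (Nat.mod_lt d hp0).le.trans ((Nat.le_div_iff_mul_le hp0).mpr hd)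
  have hdecomp : d = (d % p) • (p + 1) + (d / p - d % p) • p := by
    have := Nat.div_add_mod d p
    simp only [smul_eq_mul]
    zify [hrq] at this ⊢
    linear_combination -this
  rw [hdecomp]
  exact M.add_mem (M.nsmul_mem hp1 _) (M.nsmul_mem hp _)

namespace PowerSeries

section Supported

variable (k : Type*) [CommRing k]

def supported (N : Set ℕ) : Submodule k k⟦X⟧ where
  carrier := {f | ∀ d, coeff d f ≠ 0 → d ∈ N}
  add_mem' {f g} hf hg d hd := by
    by_contra hdN
    simp [of_not_not (mt (hf d) hdN), of_not_not (mt (hg d) hdN)] at hd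
  zero_mem' := by simp
  smul_mem' c f hf d hd := hf d (right_ne_zero_of_mul (by simpa using hd))

variable {k}

theorem X_pow_mem_supported {N : Set ℕ} {d : ℕ} (hd : d ∈ N) :
    (X : k⟦X⟧) ^ d ∈ supported k N := by
  intro e he
  obtain rfl : e = d := by by_contra h; simp [coeff_X_pow, h] at he
  exact hd

theorem supported_mono {N N' : Set ℕ} (h : N ⊆ N') : supported k N ≤ supported k N' :=
  fun _ hf d hd => h (hf d hd)

theorem X_pow_mul_mem_supported_iff {N : Set ℕ} {n : ℕ} {f : k⟦X⟧} :
    X ^ n * f ∈ supported k N ↔ f ∈ supported k {d | d + n ∈ N} := by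
  refine ⟨fun h d hd => h _ (by rwa [coeff_X_pow_mul]), fun h d hd => ?_⟩
  rw [coeff_X_pow_mul'] at hd
  split_ifs at hd with hnd
  · simpa [Nat.sub_add_cancel hnd] using h _ hd
  · exact absurd rfl hd

theorem X_pow_mul_mem_supported {N : Set ℕ} {c : ℕ} (hc : ∀ d, c ≤ d → d ∈ N) (g : k⟦X⟧) :
    X ^ c * g ∈ supported k N :=
  X_pow_mul_mem_supported_iff.mpr fun d _ => hc _ (Nat.le_add_left c d)

theorem mul_mem_supported {N₁ N₂ N : Set ℕ} (hN : ∀ i ∈ N₁, ∀ j ∈ N₂, i + j ∈ N)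
    {f g : k⟦X⟧} (hf : f ∈ supported k N₁) (hg : g ∈ supported k N₂) : f * g ∈ supported k N := by
  intro d hd
  rw [coeff_mul] at hd
  obtain ⟨p, hp, hne⟩ := Finset.exists_ne_zero_of_sum_ne_zero hd
  rw [← Finset.HasAntidiagonal.mem_antidiagonal.mp hp]
  exact hN _ (hf _ (left_ne_zero_of_mul hne)) _ (hg _ (right_ne_zero_of_mul hne))

theorem derivative_mem_supported {N : Set ℕ} {f : k⟦X⟧} (hf : f ∈ supported k N) :
    d⁄dX k f ∈ supported k {d | d + 1 ∈ N} := fun d hd =>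
  hf (d + 1) (left_ne_zero_of_mul (by rwa [coeff_derivative] at hd))

theorem exists_forall_le_mem_of_mul_X_eq {M : AddSubmonoid ℕ} {a b : k⟦X⟧}
    (ha : a ∈ supported k M) (hb : b ∈ supported k M) (hb0 : b ≠ 0) (hab : b * X = a) :
    ∃ c, ∀ d, c ≤ d → d ∈ M := by
  obtain ⟨p, hp⟩ := exists_coeff_ne_zero_iff_ne_zero.mpr hb0
  exact ⟨p * p, fun d => AddSubmonoid.mem_of_mul_self_le (hb p hp)
    (ha (p + 1) (by rwa [← hab, coeff_succ_mul_X]))⟩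

variable (k) in
noncomputable def supportedSubalgebra (N : AddSubmonoid ℕ) : Subalgebra k k⟦X⟧ :=
  (supported k N).toSubalgebra (by simpa using X_pow_mem_supported N.zero_mem)
    fun _ _ => mul_mem_supported fun _ hi _ hj => N.add_mem hi hj

theorem mem_supportedSubalgebra {N : AddSubmonoid ℕ} {f : k⟦X⟧} :
    f ∈ supportedSubalgebra k N ↔ f ∈ supported k N := Iff.rfl

theorem toSubmodule_supportedSubalgebra (N : AddSubmonoid ℕ) :
    Subalgebra.toSubmodule (supportedSubalgebra k N) = supported k N :=
  Submodule.toSubalgebra_toSubmodule _ _ _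

theorem rank_supported_quotient (A B : Set ℕ) :
    Module.rank k (supported k B ⧸ (supported k A).comap (supported k B).subtype) =
      Module.rank k (↥(B \ A) → k) := by
  classical
  let φ : supported k B →ₗ[k] ↥(B \ A) → k :=
    (LinearMap.pi fun d : ↥(B \ A) => coeff (d : ℕ)).comp (supported k B).subtype
  have hφ : Function.Surjective φ := fun w =>
    ⟨⟨mk fun d => if h : d ∈ B \ A then w ⟨d, h⟩ else 0, fun d hd => by
      by_contra hdB
      simp [hdB] at hd⟩, funext fun d => by simp [φ, d.2.1, d.2.2]⟩
  have hker : LinearMap.ker φ = (supported k A).comap (supported k B).subtype := by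
    ext f
    simp only [LinearMap.mem_ker, Submodule.mem_comap, Submodule.subtype_apply, funext_iff]
    refine ⟨fun h d hd => by_contra fun hdA => hd (h ⟨d, f.2 d hd, hdA⟩), fun h d => ?_⟩
    exact of_not_not (mt (h d) d.2.2)
  rw [← hker]
  exact (LinearMap.quotKerEquivOfSurjective φ hφ).rank_eq

end Supported

section Conductor

variable {k : Type*} [Field k] {A : Subalgebra k k⟦X⟧} {c : ℕ}

theorem inv_mem_of_forall_X_pow_mul_mem (hA : ∀ g, X ^ c * g ∈ A) {f : k⟦X⟧} (hf : f ∈ A) :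
    f⁻¹ ∈ A := by
  by_cases hf0 : constantCoeff f = 0
  · simp [inv_eq_zero.mpr hf0]
  set h := 1 - C (constantCoeff f)⁻¹ * f
  have hh : h ∈ A := sub_mem A.one_mem (mul_mem (A.algebraMap_mem _) hf)
  obtain ⟨g, hg⟩ : X ^ c ∣ h ^ c := pow_dvd_pow_of_dvd (X_dvd_iff.mpr (by simp [h, hf0])) c
  -- geometric series: `(1 - h)⁻¹ = ∑_{j < c} h ^ j + h ^ c (1 - h)⁻¹`, with tail in `X ^ c k⟦X⟧`
  have key : f⁻¹ = C (constantCoeff f)⁻¹ * ∑ j ∈ Finset.range c, h ^ j + X ^ c * (g * f⁻¹) := by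
    rw [inv_eq_iff_mul_eq_one hf0, ← mul_assoc, ← hg]
    calc (C (constantCoeff f)⁻¹ * ∑ j ∈ Finset.range c, h ^ j + h ^ c * f⁻¹) * f
        = (∑ j ∈ Finset.range c, h ^ j) * (1 - h) + h ^ c * (f⁻¹ * f) := by simp only [h]; ring
      _ = 1 := by rw [geom_sum_mul_neg, PowerSeries.inv_mul_cancel f hf0]; ring
  rw [key]
  exact add_mem (mul_mem (A.algebraMap_mem _) (sum_mem fun j _ => pow_mem hh j)) (hA _)

theorem supported_le_of_forall_X_pow_mul_mem (hA : ∀ g, X ^ c * g ∈ A) {N : Set ℕ}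
    (hN : ∀ d ∈ N, X ^ d ∈ A) : supported k N ≤ Subalgebra.toSubmodule A := by
  intro f hf
  set p := ∑ d ∈ Finset.range c, C (coeff d f) * X ^ d
  have hp : p ∈ A := sum_mem fun d _ => by
    by_cases hd : coeff d f = 0
    · simp [hd]
    · exact mul_mem (A.algebraMap_mem _) (hN d (hf d hd))
  obtain ⟨g, hg⟩ : X ^ c ∣ f - p := X_pow_dvd_iff.mpr fun d hd => by
    simp [p, coeff_X_pow, hd]
  rw [← sub_add_cancel f p, hg]
  exact add_mem (hA g) hp

theorem isUnit_iff_constantCoeff_ne_zero_of_forall_X_pow_mul_mem (hA : ∀ g, X ^ c * g ∈ A) {a : A} :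
    IsUnit a ↔ constantCoeff (a : k⟦X⟧) ≠ 0 := by
  refine ⟨fun h => isUnit_iff_ne_zero.mp (isUnit_iff_constantCoeff.mp (h.map A.val)), fun h => ?_⟩
  exact IsUnit.of_mul_eq_one (b := ⟨_, inv_mem_of_forall_X_pow_mul_mem hA a.2⟩)
    (Subtype.ext (PowerSeries.mul_inv_cancel _ h))

end Conductor

section QuadTransform

variable {k : Type*} [Field k] {R : Subalgebra k k⟦X⟧} {m : ℕ} {x : R} {xs : Fin m → R}
  {zs : Fin m → k⟦X⟧}

theorem mem_quadTransform_of_mul_mem_span (hz : ∀ i, (x : k⟦X⟧) * zs i = xs i)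
    (hx : (x : k⟦X⟧) ≠ 0) {y : R} (hy : y ∈ Ideal.span (insert x (Set.range xs))) {w : k⟦X⟧}
    (hw : x * w = y) : w ∈ quadTransform R zs := by
  obtain ⟨a, z, hz', rfl⟩ := Ideal.mem_span_insert.mp hy
  obtain ⟨c, rfl⟩ := Ideal.mem_span_range_iff_exists_fun.mp hz'
  have hw' : w = a + ∑ i, c i * zs i := mul_left_cancel₀ hx <| by
    simp [hw, mul_add, Finset.mul_sum, ← hz, mul_left_comm _ (x : k⟦X⟧), mul_comm]
  have hR : (R : Set k⟦X⟧) ⊆ quadTransform R zs := Set.subset_union_left.trans Algebra.subset_adjoin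
  have hzs : ∀ i, zs i ∈ quadTransform R zs := fun i =>
    Algebra.subset_adjoin (Set.mem_union_right _ ⟨i, rfl⟩)
  rw [hw']
  exact add_mem (hR a.2) (sum_mem fun i _ => mul_mem (hR (c i).2) (hzs i))

variable {M : AddSubmonoid ℕ} {c n : ℕ} {u : k⟦X⟧}

theorem mem_of_eq_X_pow_mul {x : supportedSubalgebra k M} (hxu : (x : k⟦X⟧) = X ^ n * u)
    (hu : constantCoeff u ≠ 0) : n ∈ M :=
  x.2 n (by simpa [hxu, coeff_X_pow_mul'] using hu)

theorem coe_ne_zero_of_forall_mem_span (hc : ∀ d, c ≤ d → d ∈ M) {x : supportedSubalgebra k M}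
    {xs : Fin m → supportedSubalgebra k M} (hz : ∀ i, (x : k⟦X⟧) * zs i = xs i)
    (hspan : ∀ y : supportedSubalgebra k M, constantCoeff (y : k⟦X⟧) = 0 →
      y ∈ Ideal.span (insert x (Set.range xs))) :
    (x : k⟦X⟧) ≠ 0 := by
  intro hx
  have hbot : Ideal.span (insert x (Set.range xs)) = ⊥ := by
    rw [Ideal.span_eq_bot]
    rintro _ (rfl | ⟨i, rfl⟩)
    · exact Subtype.ext hx
    · exact Subtype.ext (by simp [← hz i, hx])
  have := hspan ⟨X ^ (c + 1), X_pow_mem_supported (hc _ c.le_succ)⟩ (by simp)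
  rw [hbot, Ideal.mem_bot] at this
  exact pow_ne_zero _ X_ne_zero (congrArg Subtype.val this)

theorem quadTransform_le_supportedSubalgebra (hc : ∀ d, c ≤ d → d ∈ M)
    {x : supportedSubalgebra k M} {xs : Fin m → supportedSubalgebra k M}
    (hz : ∀ i, (x : k⟦X⟧) * zs i = xs i) (hxu : (x : k⟦X⟧) = X ^ n * u)
    (hu : constantCoeff u ≠ 0) :
    quadTransform (supportedSubalgebra k M) zs ≤
      supportedSubalgebra k (AddSubmonoid.closure {d | d + n ∈ M}) := by
  have hdiv : ∀ {f}, X ^ n * f ∈ supported k M →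
      f ∈ supportedSubalgebra k (AddSubmonoid.closure {d | d + n ∈ M}) := fun h =>
    supported_mono AddSubmonoid.subset_closure (X_pow_mul_mem_supported_iff.mp h)
  have huinv := inv_mem_of_forall_X_pow_mul_mem
    (A := supportedSubalgebra k (AddSubmonoid.closure {d | d + n ∈ M}))
    (X_pow_mul_mem_supported (c := c) fun d hd =>
      AddSubmonoid.subset_closure (show d + n ∈ M from hc _ (by omega)))
    (hdiv (hxu ▸ x.2))
  refine Algebra.adjoin_le ?_
  rintro f (hf | ⟨i, rfl⟩)
  · exact hdiv ((supportedSubalgebra k M).mul_mem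
      (X_pow_mem_supported (mem_of_eq_X_pow_mul hxu hu)) hf)
  · rw [← one_mul (zs i), ← PowerSeries.inv_mul_cancel u hu, mul_assoc]
    refine mul_mem huinv (hdiv ?_)
    rw [← mul_assoc, ← hxu, hz]
    exact (xs i).2

theorem supportedSubalgebra_le_quadTransform (hc : ∀ d, c ≤ d → d ∈ M)
    {x : supportedSubalgebra k M} {xs : Fin m → supportedSubalgebra k M}
    (hz : ∀ i, (x : k⟦X⟧) * zs i = xs i) (hxu : (x : k⟦X⟧) = X ^ n * u)
    (hu : constantCoeff u ≠ 0) (hn : 0 < n)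
    (hspan : ∀ y : supportedSubalgebra k M, constantCoeff (y : k⟦X⟧) = 0 →
      y ∈ Ideal.span (insert x (Set.range xs))) :
    supportedSubalgebra k (AddSubmonoid.closure {d | d + n ∈ M}) ≤
      quadTransform (supportedSubalgebra k M) zs := by
  set R₁ := quadTransform (supportedSubalgebra k M) zs
  have hcR₁ : ∀ g, X ^ c * g ∈ R₁ := fun g =>
    Algebra.subset_adjoin (Or.inl (X_pow_mul_mem_supported hc g))
  have hx0 : (x : k⟦X⟧) ≠ 0 := by
    rw [hxu]
    exact mul_ne_zero (pow_ne_zero _ X_ne_zero) fun h => hu (by simp [h])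
  -- `u⁻¹ X ^ g = X ^ (g + n) / x` with `X ^ (g + n)` in the maximal ideal
  have hdiv : ∀ g, g + n ∈ M → u⁻¹ * X ^ g ∈ R₁ := fun g hg =>
    mem_quadTransform_of_mul_mem_span hz hx0
      (hspan ⟨X ^ (g + n), X_pow_mem_supported hg⟩ (by simp [hn.ne'])) <| by
        rw [hxu, mul_assoc, ← mul_assoc u, PowerSeries.mul_inv_cancel u hu, one_mul, ← pow_add,
          add_comm]
  have hu₁ : u ∈ R₁ := by
    rw [(eq_inv_iff_mul_eq_one (by simpa using hu)).mpr (PowerSeries.mul_inv_cancel u hu)]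
    exact inv_mem_of_forall_X_pow_mul_mem hcR₁
      (by simpa using hdiv 0 (by simpa using mem_of_eq_X_pow_mul hxu hu))
  intro f hf
  refine supported_le_of_forall_X_pow_mul_mem hcR₁ (fun d hd => ?_) hf
  induction hd using AddSubmonoid.closure_induction with
  | mem g hg =>
    rw [← one_mul (X ^ g), ← PowerSeries.mul_inv_cancel u hu, mul_assoc]
    exact mul_mem hu₁ (hdiv g hg)
  | zero => simp [R₁.one_mem]
  | add a b _ _ ha hb => simpa [pow_add] using mul_mem ha hb

end QuadTransform

section Derivative

variable {k : Type*} [Field k] [CharZero k]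

theorem mulDeriv_supportedSubalgebra (N : AddSubmonoid ℕ) :
    mulDeriv k (supportedSubalgebra k N) (supportedSubalgebra k N) =
      supported k {d | d + 1 ∈ N} := by
  refine le_antisymm (Submodule.span_le.mpr ?_) fun f hf => Submodule.subset_span ?_
  · rintro _ ⟨a, ha, b, hb, rfl⟩
    exact mul_mem_supported (fun i hi j hj => by simpa [add_assoc] using N.add_mem hi hj) ha
      (derivative_mem_supported hb)
  · set g : k⟦X⟧ := mk fun d => coeff d f / (d + 1)
    have hg : X ^ 1 * g ∈ supported k N := X_pow_mul_mem_supported_iff.mpr fun d hd =>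
      hf d (left_ne_zero_of_mul (by simpa [g, div_eq_mul_inv] using hd))
    refine ⟨1, one_mem _, X * g, mem_supportedSubalgebra.mpr (by simpa using hg), ?_⟩
    ext d
    change coeff d f = coeff d (1 * d⁄dX k (X * g))
    rw [one_mul, coeff_derivative, coeff_succ_X_mul, coeff_mk,
      div_mul_cancel₀ _ (by exact_mod_cast d.succ_ne_zero)]

theorem rank_mulDeriv_quotient_eq_rank_quotient (M M₁ : AddSubmonoid ℕ) :
    Module.rank k
        (↥(mulDeriv k (supportedSubalgebra k M₁ : Set k⟦X⟧) (supportedSubalgebra k M₁)) ⧸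
          (mulDeriv k (supportedSubalgebra k M : Set k⟦X⟧) (supportedSubalgebra k M)).comap
            (mulDeriv k (supportedSubalgebra k M₁ : Set k⟦X⟧) (supportedSubalgebra k M₁)).subtype)
      = Module.rank k
        (↥(Subalgebra.toSubmodule (supportedSubalgebra k M₁)) ⧸
          (Subalgebra.toSubmodule (supportedSubalgebra k M)).comap
            (Subalgebra.toSubmodule (supportedSubalgebra k M₁)).subtype) := by
  have hshift : Set.BijOn (· + 1) ({d | d + 1 ∈ M₁} \ {d | d + 1 ∈ M}) (M₁ \ M) := by
    refine ⟨fun d hd => hd, fun _ _ _ _ h => Nat.succ_injective h, fun b hb => ?_⟩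
    rcases b with _ | b
    · exact absurd M.zero_mem hb.2
    · exact ⟨b, hb, rfl⟩
  rw [mulDeriv_supportedSubalgebra, mulDeriv_supportedSubalgebra, toSubmodule_supportedSubalgebra,
    toSubmodule_supportedSubalgebra, rank_supported_quotient, rank_supported_quotient]
  exact (LinearEquiv.funCongrLeft k k (hshift.equiv _).symm).rank_eq

end Derivative

end PowerSeries

theorem quadTransform_of_semigroupRing_general
    (k : Type*) [Field k] [CharZero k]
    (R : Subalgebra k (PowerSeries k)) [IsLocalRing ↥R]
    (hsg : IsSemigroupRing R)
    -- `S = k⟦t⟧` is the normalization of `R`: it lies in the quotient field of `R`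
    (hfrac : ∀ f : PowerSeries k, ∃ a b : ↥R, b ≠ 0 ∧ (b : PowerSeries k) * f = a)
    -- a minimal system of generators `x, x₂, …, xₙ` of the maximal ideal,
    (m : ℕ) (x : ↥R) (xs : Fin m → ↥R)
    (hgen : Ideal.span (insert x (Set.range xs)) = IsLocalRing.maximalIdeal ↥R)
    -- the elements `zs i = xᵢ/x` of `S`
    (zs : Fin m → PowerSeries k) (hz : ∀ i, (x : PowerSeries k) * zs i = xs i) :
    IsSemigroupRing (quadTransform R zs) ∧
    Module.rank k
        (↥(mulDeriv k (quadTransform R zs : Set (PowerSeries k))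
              (quadTransform R zs : Set (PowerSeries k))) ⧸
          (mulDeriv k (R : Set (PowerSeries k)) (R : Set (PowerSeries k))).comap
            (mulDeriv k (quadTransform R zs : Set (PowerSeries k))
              (quadTransform R zs : Set (PowerSeries k))).subtype)
      = Module.rank k
        (↥(Subalgebra.toSubmodule (quadTransform R zs)) ⧸
          (Subalgebra.toSubmodule R).comap
            (Subalgebra.toSubmodule (quadTransform R zs)).subtype) := by
  obtain ⟨M, hM⟩ := hsg
  obtain rfl : R = supportedSubalgebra k M := SetLike.ext hM
  obtain ⟨a, b, hb0, hab⟩ := hfrac X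
  obtain ⟨c, hc⟩ := exists_forall_le_mem_of_mul_X_eq a.2 b.2 (fun h => hb0 (Subtype.ext h)) hab
  have hmax : ∀ y : supportedSubalgebra k M,
      y ∈ IsLocalRing.maximalIdeal _ ↔ constantCoeff (y : k⟦X⟧) = 0 := fun y => by
    rw [IsLocalRing.mem_maximalIdeal, mem_nonunits_iff, not_iff_comm,
      isUnit_iff_constantCoeff_ne_zero_of_forall_X_pow_mul_mem (X_pow_mul_mem_supported hc)]
  have hspan : ∀ y : supportedSubalgebra k M, constantCoeff (y : k⟦X⟧) = 0 →
      y ∈ Ideal.span (insert x (Set.range xs)) := fun y hy => hgen ▸ (hmax y).mpr hy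
  have hx0 := coe_ne_zero_of_forall_mem_span hc hz hspan
  have hxu := (X_pow_order_mul_divXPowOrder (f := (x : k⟦X⟧))).symm
  have hu := constantCoeff_divXPowOrder_eq_zero_iff.not.mpr hx0
  have hn : 0 < (x : k⟦X⟧).order.toNat := by
    have hx : constantCoeff (x : k⟦X⟧) = 0 :=
      (hmax x).mp (hgen ▸ Ideal.subset_span (Set.mem_insert _ _))
    exact ENat.toNat_pos (order_ne_zero_iff_constCoeff_eq_zero.mpr hx) (order_eq_top.not.mpr hx0)
  rw [le_antisymm (quadTransform_le_supportedSubalgebra hc hz hxu hu)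
    (supportedSubalgebra_le_quadTransform hc hz hxu hu hn hspan)]
  exact ⟨⟨_, fun _ => Iff.rfl⟩, rank_mulDeriv_quotient_eq_rank_quotient _ _⟩

/-- Let `R` be a one-dimensional complete local domain over an algebraically
closed field `k` of characteristic zero which is a semigroup ring inside its normalization
`S = k⟦t⟧`.  Then its first quadratic transform `R₁` is again a semigroup ring, and
`dim_k (R₁·DR₁ / R·DR) = dim_k (R₁/R)`. -/
theorem quadTransform_of_semigroupRing
    (k : Type*) [Field k] [IsAlgClosed k] [CharZero k]
    (R : Subalgebra k (PowerSeries k)) [IsLocalRing ↥R]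
    (hsg : IsSemigroupRing R)
    -- `S = k⟦t⟧` is the normalization of `R`: it lies in the quotient field of `R`
    (hfrac : ∀ f : PowerSeries k, ∃ a b : ↥R, b ≠ 0 ∧ (b : PowerSeries k) * f = a)
    -- and is a finite `R`-module
    (hfin : Module.Finite ↥R (PowerSeries k))
    -- a minimal system of generators `x, x₂, …, xₙ` of the maximal ideal,
    (m : ℕ) (x : ↥R) (xs : Fin m → ↥R)
    (hgen : Ideal.span (insert x (Set.range xs)) = IsLocalRing.maximalIdeal ↥R)
    (hminimal : ¬ ∃ T : Set ↥R, T ⊂ insert x (Set.range xs) ∧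
      Ideal.span T = IsLocalRing.maximalIdeal ↥R)
    -- with `x` of minimal value: `ν(x) < ν(xᵢ)`
    (hval : ∀ y : ↥R, y ∈ IsLocalRing.maximalIdeal ↥R → y ≠ 0 →
      (x : PowerSeries k).order ≤ (y : PowerSeries k).order)
    (hord : ∀ i, (x : PowerSeries k).order < ((xs i : ↥R) : PowerSeries k).order)
    -- the elements `zs i = xᵢ/x` of `S`
    (zs : Fin m → PowerSeries k) (hz : ∀ i, (x : PowerSeries k) * zs i = xs i) :
    IsSemigroupRing (quadTransform R zs) ∧
    Module.rank k
        (↥(mulDeriv k (quadTransform R zs : Set (PowerSeries k))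
              (quadTransform R zs : Set (PowerSeries k))) ⧸
          (mulDeriv k (R : Set (PowerSeries k)) (R : Set (PowerSeries k))).comap
            (mulDeriv k (quadTransform R zs : Set (PowerSeries k))
              (quadTransform R zs : Set (PowerSeries k))).subtype)
      = Module.rank k
        (↥(Subalgebra.toSubmodule (quadTransform R zs)) ⧸
          (Subalgebra.toSubmodule R).comap
            (Subalgebra.toSubmodule (quadTransform R zs)).subtype) :=
  quadTransform_of_semigroupRing_general k R hsg hfrac m x xs hgen zs hz
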